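/- Let d, t ≥ 0 and let Z be a chi-squared random variable with d degrees of freedom (i.e., the squared Euclidean norm of a standard Gaussian vector in R^d). Then P[Z ≥ d - 2√(d t)] ≥ 1 - e^{-t}. -/

import Mathlib

/-!
Chernoff's method for the lower tail of `S = ‖Z‖²`. The squares `Z_i²` are independent with
`E[e^{s Z_i²}] = (1 - 2s)^{-1/2}`, so for `λ ≥ 0`
`P[S ≤ d - a] ≤ e^{λ(d - a)} (1 + 2λ)^{-d/2}`. The choice `1 + 2λ = d / (d - a)` turns the bound
into `exp (a/2 + (d/2) log (1 - a/d))`, and `log (1 - x) ≤ -x - x²/2` bounds this by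
`exp (-a² / 4d)`, which is `e^{-t}` for `a = 2√(dt)`.
-/

open MeasureTheory ProbabilityTheory Real
open scoped NNReal

lemma Real.add_sq_div_two_le_neg_log_one_sub {x : ℝ} (hx0 : 0 ≤ x) (hx1 : x < 1) :
    x + x ^ 2 / 2 ≤ -log (1 - x) := by
  have hlog := hasSum_pow_div_log_of_abs_lt_one (abs_lt.2 ⟨by linarith, hx1⟩)
  have h := sum_le_hasSum (Finset.range 2) (fun n _ => by positivity) hlog
  norm_num [Finset.sum_range_succ] at h
  exact h

lemma integral_exp_mul_sq_gaussianReal {v : ℝ≥0} {s : ℝ} (hs : 2 * v * s < 1) :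
    ∫ x, exp (s * x ^ 2) ∂gaussianReal 0 v = (√(1 - 2 * v * s))⁻¹ := by
  rcases eq_or_ne v 0 with rfl | hv
  · simp [gaussianReal_zero_var]
  have hdens (x : ℝ) : gaussianPDFReal 0 v x • exp (s * x ^ 2)
      = (√(2 * π * v))⁻¹ * exp (-((1 - 2 * v * s) / (2 * v)) * x ^ 2) := by
    rw [gaussianPDFReal_def, smul_eq_mul, mul_assoc, ← exp_add]
    congr 2
    field_simp
    ring
  have hb : 0 < 1 - 2 * (v : ℝ) * s := by linarith
  simp_rw [integral_gaussianReal_eq_integral_smul hv, hdens, integral_const_mul, integral_gaussian]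
  rw [div_div_eq_mul_div, sqrt_div' _ hb.le, show π * (2 * v) = 2 * π * v by ring]
  field_simp

section Tail

variable {Ω : Type*} {mΩ : MeasurableSpace Ω} {μ : Measure Ω}

lemma mgf_sq_of_map_eq_gaussianReal {X : Ω → ℝ} {v : ℝ≥0} (hX : μ.map X = gaussianReal 0 v)
    {s : ℝ} (hs : 2 * v * s < 1) :
    mgf (fun ω => X ω ^ 2) μ s = (√(1 - 2 * v * s))⁻¹ := by
  have hXm : AEMeasurable X μ :=
    .of_map_ne_zero (by rw [hX]; exact IsProbabilityMeasure.ne_zero _)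
  rw [← integral_exp_mul_sq_gaussianReal hs, ← hX, integral_map hXm (by fun_prop)]
  rfl

lemma mgf_sum_sq_of_iIndepFun_gaussianReal {ι : Type*} [Fintype ι] {X : ι → Ω → ℝ}
    (hindep : iIndepFun X μ) (hlaw : ∀ i, μ.map (X i) = gaussianReal 0 1) {s : ℝ}
    (hs : 2 * s < 1) :
    mgf (fun ω => ∑ i, X i ω ^ 2) μ s = (√(1 - 2 * s))⁻¹ ^ Fintype.card ι := by
  have hXm (i : ι) : AEMeasurable (X i) μ :=
    .of_map_ne_zero (by rw [hlaw i]; exact IsProbabilityMeasure.ne_zero _)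
  have hsq : iIndepFun (fun i ω => X i ω ^ 2) μ :=
    hindep.comp (fun _ x => x ^ 2) (fun _ => by fun_prop)
  have hprod := hsq.mgf_sum₀ (fun i => (hXm i).pow_const 2) Finset.univ (t := s)
  simp only [Finset.sum_fn] at hprod
  simp [hprod, mgf_sq_of_map_eq_gaussianReal (hlaw _) (by simpa using hs)]

lemma measureReal_le_sub_le_exp_of_mgf [IsFiniteMeasure μ] {S : Ω → ℝ} (n : ℕ)
    (hmgf : ∀ s ≤ 0, mgf S μ s = (√(1 - 2 * s))⁻¹ ^ n) {a : ℝ} (ha : 0 ≤ a) (han : a < n) :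
    μ.real {ω | S ω ≤ n - a} ≤ exp (-(a ^ 2 / (4 * n))) := by
  have hn : (0 : ℝ) < n := ha.trans_lt han
  have hna : 0 < n - a := by linarith
  set l := a / (2 * (n - a)) with hl
  have hl0 : 0 ≤ l := by positivity
  -- The mgf formula leaves no room for the junk value `0` of a non-integrable integral.
  have hint : Integrable (fun ω => exp (-l * S ω)) μ := by
    refine Integrable.of_integral_ne_zero ?_
    change mgf S μ (-l) ≠ 0
    rw [hmgf _ (by linarith)]
    have : 0 < 1 - 2 * -l := by linarith
    positivity
  have hx1 : a / n < 1 := (div_lt_one hn).2 han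
  have hlog := Real.add_sq_div_two_le_neg_log_one_sub (by positivity) hx1
  calc μ.real {ω | S ω ≤ n - a} ≤ exp (-(-l) * (n - a)) * mgf S μ (-l) :=
        measure_le_le_exp_mul_mgf _ (by linarith) hint
    _ = exp (a / 2 + n * log (1 - a / n) / 2) := by
        have h1 : 1 - 2 * -l = (1 - a / n)⁻¹ := by rw [hl]; field_simp; ring
        have h2 : (√(1 - 2 * -l))⁻¹ = exp (log (1 - a / n) / 2) := by
          rw [h1, sqrt_inv, inv_inv, sqrt_eq_rpow, rpow_def_of_pos (by linarith)]
          ring_nf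
        rw [hmgf _ (by linarith), h2, ← exp_nat_mul, ← exp_add]
        congr 1
        rw [hl]
        field_simp
    _ ≤ exp (-(a ^ 2 / (4 * n))) := by
        gcongr
        have := mul_le_mul_of_nonneg_left hlog hn.le
        field_simp at this ⊢
        nlinarith

lemma one_sub_exp_le_measureReal_sub_le_of_mgf [IsProbabilityMeasure μ] {S : Ω → ℝ} (n : ℕ)
    (hmgf : ∀ s ≤ 0, mgf S μ s = (√(1 - 2 * s))⁻¹ ^ n) {a : ℝ} (ha : 0 ≤ a) (han : a < n) :
    1 - exp (-(a ^ 2 / (4 * n))) ≤ μ.real {ω | n - a ≤ S ω} := by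
  have hcover : {ω | n - a ≤ S ω} ∪ {ω | S ω ≤ n - a} = Set.univ :=
    Set.eq_univ_of_forall fun ω => le_total (n - a : ℝ) (S ω)
  have hunion := measureReal_union_le (μ := μ) {ω | n - a ≤ S ω} {ω | S ω ≤ n - a}
  rw [hcover, probReal_univ] at hunion
  linarith [measureReal_le_sub_le_exp_of_mgf n hmgf ha han]

end Tail

theorem stmt_0_general {Ω : Type*} [MeasureSpace Ω] [IsProbabilityMeasure (ℙ : Measure Ω)]
    (d : ℕ) (Z : Ω → EuclideanSpace ℝ (Fin d))
    (hindep : iIndepFun (fun i ω => Z ω i) ℙ)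
    (hlaw : ∀ i : Fin d, Measure.map (fun ω => Z ω i) ℙ = gaussianReal 0 1)
    (t : ℝ) (ht : 0 ≤ t) :
    1 - Real.exp (-t) ≤
      (ℙ {ω | (d : ℝ) - 2 * Real.sqrt (d * t) ≤ ‖Z ω‖ ^ 2}).toReal := by
  set a := 2 * √(d * t)
  rcases le_or_gt (d : ℝ) a with hda | had
  · have hall : {ω | (d : ℝ) - a ≤ ‖Z ω‖ ^ 2} = Set.univ :=
      Set.eq_univ_of_forall fun ω => (sub_nonpos.2 hda).trans (by positivity)
    rw [hall, measure_univ, ENNReal.toReal_one]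
    linarith [exp_pos (-t)]
  have hmgf (s : ℝ) (hs : s ≤ 0) :
      mgf (fun ω => ∑ i, Z ω i ^ 2) ℙ s = (√(1 - 2 * s))⁻¹ ^ d := by
    simpa using mgf_sum_sq_of_iIndepFun_gaussianReal hindep hlaw (s := s) (by linarith)
  have ha : a ^ 2 / (4 * d) = t := by
    have hd : (0 : ℝ) < d := (by positivity : 0 ≤ a).trans_lt had
    rw [mul_pow, sq_sqrt (by positivity)]
    field_simp
    ring
  have hnorm (ω : Ω) : ‖Z ω‖ ^ 2 = ∑ i, Z ω i ^ 2 := by simp [EuclideanSpace.norm_sq_eq]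
  simpa only [← measureReal_def, hnorm, ha] using
    one_sub_exp_le_measureReal_sub_le_of_mgf d hmgf (by positivity) had

/-- Laurent–Massart lower-tail bound: if `Z` is the squared Euclidean norm of a
standard Gaussian vector in `ℝ^d` (i.e. chi-squared with `d` degrees of freedom),
then `P[Z ≥ d - 2√(dt)] ≥ 1 - e^{-t}`. -/
theorem stmt_0 {Ω : Type*} [MeasureSpace Ω] [IsProbabilityMeasure (ℙ : Measure Ω)]
    (d : ℕ) (Z : Ω → EuclideanSpace ℝ (Fin d)) (hZ : Measurable Z)
    (hindep : iIndepFun (fun i ω => Z ω i) ℙ)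
    (hlaw : ∀ i : Fin d, Measure.map (fun ω => Z ω i) ℙ = gaussianReal 0 1)
    (t : ℝ) (ht : 0 ≤ t) :
    1 - Real.exp (-t) ≤
      (ℙ {ω | (d : ℝ) - 2 * Real.sqrt (d * t) ≤ ‖Z ω‖ ^ 2}).toReal :=
  stmt_0_general d Z hindep hlaw t ht
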